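/- arXiv:1104.0792 — 3 statements merged into one kernel-verified Lean document; each statement's English description precedes it below -/
import Mathlib

section
/- (Lower semicontinuity of the mixed pseudo-modular.) Let u_i ∈ B̃V^{p(·)}(Ω) be a sequence such that u_i → u in L^{p(·)}(Ω). Then ρ̃_{BV^{p(·)}(Ω)}(u) ≤ liminf_{i→∞} ρ̃_{BV^{p(·)}(Ω)}(u_i). -/
open MeasureTheory Filter Topology ENNReal Set

noncomputable section

/-- Euclidean space `ℝⁿ`. -/
abbrev Eu (n : ℕ) : Type := EuclideanSpace ℝ (Fin n)

/-- The modular `ρ_{p(·)}(u) = ∫_Ω |u|^{p(x)} dx`. -/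
def vModular {n : ℕ} (p : Eu n → ℝ) (Ω : Set (Eu n)) (u : Eu n → ℝ) : ℝ≥0∞ :=
  ∫⁻ x in Ω, ENNReal.ofReal (|u x| ^ p x)

/-- The gradient modular `∫_Ω |∇u|^{p(x)} dx` (for a.e. differentiable `u`,
`fderiv` is the gradient). -/
def gradModular {n : ℕ} (p : Eu n → ℝ) (Ω : Set (Eu n)) (u : Eu n → ℝ) : ℝ≥0∞ :=
  ∫⁻ x in Ω, ENNReal.ofReal (‖fderiv ℝ u x‖ ^ p x)

/-- Membership in the variable exponent Lebesgue space `L^{p(·)}(Ω)`. -/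
def MemLpVar {n : ℕ} (p : Eu n → ℝ) (Ω : Set (Eu n)) (u : Eu n → ℝ) : Prop :=
  Measurable u ∧ ∃ l : ℝ, 0 < l ∧ vModular p Ω (fun x => u x / l) < ⊤

/-- The Luxemburg norm on `L^{p(·)}(Ω)`. -/
def luxNorm {n : ℕ} (p : Eu n → ℝ) (Ω : Set (Eu n)) (u : Eu n → ℝ) : ℝ :=
  sInf {l : ℝ | 0 < l ∧ vModular p Ω (fun x => u x / l) ≤ 1}

/-- Convergence `v i → u` in `L^{p(·)}(Ω)` (Luxemburg norm convergence). -/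
def LpTendsto {n : ℕ} (p : Eu n → ℝ) (Ω : Set (Eu n)) (v : ℕ → Eu n → ℝ)
    (u : Eu n → ℝ) : Prop :=
  Tendsto (fun i => luxNorm p Ω (fun x => v i x - u x)) atTop (𝓝 0)

/-- `u` is locally Lipschitz on `Ω`. -/
def LocLipOn {n : ℕ} (Ω : Set (Eu n)) (u : Eu n → ℝ) : Prop :=
  ∀ x ∈ Ω, ∃ K : NNReal, ∃ t ∈ 𝓝[Ω] x, LipschitzOnWith K u t

/-- The relaxed mixed pseudo-modular `ρ̃_{BV^{p(·)}(Ω)}(u)`: the infimum of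
`liminf_i ∫_Ω |∇u_i|^{p(x)} dx` over all sequences of locally Lipschitz functions
in `L^{p(·)}(Ω)` converging to `u` in `L^{p(·)}(Ω)`. -/
def bvModular {n : ℕ} (p : Eu n → ℝ) (Ω : Set (Eu n)) (u : Eu n → ℝ) : ℝ≥0∞ :=
  ⨅ (v : ℕ → Eu n → ℝ)
    (_ : (∀ i, LocLipOn Ω (v i) ∧ MemLpVar p Ω (v i)) ∧ LpTendsto p Ω v u),
    Filter.liminf (fun i => gradModular p Ω (v i)) atTop

/-- Membership in the mixed space `B̃V^{p(·)}(Ω)`. -/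
def MemBVt {n : ℕ} (p : Eu n → ℝ) (Ω : Set (Eu n)) (u : Eu n → ℝ) : Prop :=
  MemLpVar p Ω u ∧ bvModular p Ω u < ⊤

/-- The norm `‖u‖_{B̃V^{p(·)}}`. -/
def bvNorm {n : ℕ} (p : Eu n → ℝ) (Ω : Set (Eu n)) (u : Eu n → ℝ) : ℝ :=
  luxNorm p Ω u + sInf {l : ℝ | 0 < l ∧ bvModular p Ω (fun x => u x / l) ≤ 1}

/-- The admissible class `Ã(E)` for the mixed capacity. -/
def admissibleBV {n : ℕ} (p : Eu n → ℝ) (Ω E : Set (Eu n)) : Set (Eu n → ℝ) :=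
  {u | MemBVt p Ω u ∧ (∀ x ∈ Ω, 0 ≤ u x ∧ u x ≤ 1) ∧
       ∃ U : Set (Eu n), IsOpen U ∧ E ⊆ U ∧ ∀ x ∈ U ∩ Ω, u x = 1}

/-- The mixed BV-Sobolev capacity `C̃_{BV^{p(·)}}(E)` (with `inf ∅ = ∞`). -/
def bvCapacity {n : ℕ} (p : Eu n → ℝ) (Ω E : Set (Eu n)) : ℝ≥0∞ :=
  ⨅ (u : Eu n → ℝ) (_ : u ∈ admissibleBV p Ω E), vModular p Ω u + bvModular p Ω u

/-- Divergence of a vector field. -/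
def divg {n : ℕ} (φ : Eu n → Eu n) (x : Eu n) : ℝ :=
  ∑ i, fderiv ℝ φ x (EuclideanSpace.single i 1) i

/-- Total variation `‖Du‖(U)` on an open set `U`, via the defining supremum over
`C¹` vector fields compactly supported in `U` with `|φ| ≤ 1`. -/
def totVarOpen {n : ℕ} (U : Set (Eu n)) (u : Eu n → ℝ) : ℝ≥0∞ :=
  ⨆ (φ : Eu n → Eu n)
    (_ : ContDiff ℝ 1 φ ∧ HasCompactSupport φ ∧ tsupport φ ⊆ U ∧ ∀ x, ‖φ x‖ ≤ 1),
    ENNReal.ofReal (∫ x in U, u x * divg φ x)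

/-- Total variation `‖Du‖(A)` of a set `A ⊆ Ω`, extended from open sets. -/
def totVarIn {n : ℕ} (Ω A : Set (Eu n)) (u : Eu n → ℝ) : ℝ≥0∞ :=
  ⨅ (U : Set (Eu n)) (_ : IsOpen U ∧ A ⊆ U ∧ U ⊆ Ω), totVarOpen U u

/-- `g` is the weak (distributional) gradient of `u` on `Ω`. -/
def IsWeakGrad {n : ℕ} (Ω : Set (Eu n)) (u : Eu n → ℝ) (g : Eu n → Eu n) : Prop :=
  ∀ φ : Eu n → ℝ, ContDiff ℝ 1 φ → HasCompactSupport φ → tsupport φ ⊆ Ω →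
    ∀ i : Fin n,
      (∫ x in Ω, u x * (fderiv ℝ φ x (EuclideanSpace.single i 1))) =
        - ∫ x in Ω, g x i * φ x

/-- The Harjulehto–Hästö–Latvala mixed pseudo-modular
`ρ_{BV^{p(·)}(F)}(u) = ‖Du‖(F ∩ Y) + ∫_{F∖Y} |∇u|^{p(x)} dx`, where `Y = {p = 1}`
and `g` is the weak gradient of `u` on the Sobolev part. -/
def hhlModular {n : ℕ} (p : Eu n → ℝ) (Ω F : Set (Eu n)) (u : Eu n → ℝ)
    (g : Eu n → Eu n) : ℝ≥0∞ :=
  totVarIn Ω (F ∩ {x | p x = 1}) u +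
    ∫⁻ x in F \ {x | p x = 1}, ENNReal.ofReal (‖g x‖ ^ p x)

/-- The HHL mixed pseudo-modular for (smooth) functions whose gradient is `fderiv`. -/
def hhlModularSmooth {n : ℕ} (p : Eu n → ℝ) (Ω F : Set (Eu n)) (v : Eu n → ℝ) : ℝ≥0∞ :=
  totVarIn Ω (F ∩ {x | p x = 1}) v +
    ∫⁻ x in F \ {x | p x = 1}, ENNReal.ofReal (‖fderiv ℝ v x‖ ^ p x)

/-- Membership in the HHL space `BV^{p(·)}(Ω)`: `u ∈ L^{p(·)}(Ω)` and
`inf{λ > 0 : ρ_{BV^{p(·)}(Ω)}(u/λ) ≤ 1} < ∞`. -/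
def MemBVp {n : ℕ} (p : Eu n → ℝ) (Ω : Set (Eu n)) (u : Eu n → ℝ) : Prop :=
  MemLpVar p Ω u ∧
    ∃ g : Eu n → Eu n, IsWeakGrad (Ω \ {x | p x = 1}) u g ∧
      ∃ l : ℝ, 0 < l ∧
        hhlModular p Ω Ω (fun x => u x / l) (fun x => l⁻¹ • g x) ≤ 1

/-- Mollification `u_δ = φ_δ ∗ u` (with `u` extended by zero outside `Ω`),
where `φ_δ(z) = δ^{-n} φ(z/δ)`. -/
def mollify {n : ℕ} (Ω : Set (Eu n)) (u : Eu n → ℝ) (φ : Eu n → ℝ) (δ : ℝ)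
    (x : Eu n) : ℝ :=
  ∫ y in Ω, (δ ^ n)⁻¹ * φ (δ⁻¹ • (x - y)) * u y

/-- `p` is (locally) log-Hölder continuous on `Ω` with constant `c`. -/
def LogHolderOn {n : ℕ} (c : ℝ) (Ω : Set (Eu n)) (p : Eu n → ℝ) : Prop :=
  ∀ x ∈ Ω, ∀ y ∈ Ω, |p x - p y| ≤ c / Real.log (Real.exp 1 + 1 / dist x y)

/-- `p` is globally log-Hölder continuous on `ℝⁿ` with constant `c`. -/
def LogHolderGlobal {n : ℕ} (c : ℝ) (p : Eu n → ℝ) : Prop :=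
  LogHolderOn c Set.univ p ∧
    ∃ pinf : ℝ, 1 ≤ pinf ∧ ∀ x, |p x - pinf| ≤ c / Real.log (Real.exp 1 + ‖x‖)

/-- The variable exponent Sobolev capacity `C_{p(·)}(E)`: infimum of
`∫ |u|^{p(x)} + |∇u|^{p(x)} dx` over `u ∈ W^{1,p(·)}(ℝⁿ)` with `u ≥ 1` on an
open set containing `E`. -/
def sobolevCapacity {n : ℕ} (p : Eu n → ℝ) (E : Set (Eu n)) : ℝ≥0∞ :=
  ⨅ (u : Eu n → ℝ) (g : Eu n → Eu n)
    (_ : MemLpVar p Set.univ u ∧ IsWeakGrad Set.univ u g ∧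
         MemLpVar p Set.univ (fun x => ‖g x‖) ∧
         ∃ U : Set (Eu n), IsOpen U ∧ E ⊆ U ∧ ∀ x ∈ U, 1 ≤ u x),
    vModular p Set.univ u + ∫⁻ x, ENNReal.ofReal (‖g x‖ ^ p x)

/-!
Take `c` above the liminf. Infinitely many `ui i` have pseudo-modular below `c`, so each of them
is approximated in `L^{p(·)}(Ω)` by a locally Lipschitz function with gradient modular below `c`.
Along that subsequence the approximants still converge to `u`, by the triangle inequality for the
Luxemburg norm, so they compete in the infimum defining `ρ̃(u)`, whence `ρ̃(u) ≤ c`.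
-/

section LuxemburgNorm

variable {n : ℕ} {p : Eu n → ℝ} {Ω : Set (Eu n)} {f g h : Eu n → ℝ}

lemma abs_add_div_rpow_le {q a b s t : ℝ} (hq : 1 ≤ q) (ha : 0 < a) (hb : 0 < b) :
    |(s + t) / (a + b)| ^ q ≤ a / (a + b) * |s / a| ^ q + b / (a + b) * |t / b| ^ q := by
  have hab : 0 < a + b := add_pos ha hb
  have hsplit : (s + t) / (a + b) = a / (a + b) * (s / a) + b / (a + b) * (t / b) := by
    field_simp
  calc |(s + t) / (a + b)| ^ q ≤ (a / (a + b) * |s / a| + b / (a + b) * |t / b|) ^ q := by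
        gcongr
        rw [hsplit]
        refine (abs_add_le _ _).trans_eq ?_
        rw [abs_mul, abs_mul, abs_of_pos (by positivity), abs_of_pos (div_pos hb hab)]
    _ ≤ a / (a + b) * |s / a| ^ q + b / (a + b) * |t / b| ^ q :=
        (convexOn_rpow hq).2 (abs_nonneg (s / a)) (abs_nonneg (t / b)) (by positivity)
          (by positivity) (by field_simp)

lemma abs_div_rpow_le {q s t : ℝ} (hq : 1 ≤ q) (ht : 1 ≤ t) : |s / t| ^ q ≤ |s| ^ q / t := by
  rw [abs_div, abs_of_pos (show 0 < t by linarith), Real.div_rpow (abs_nonneg s) (by linarith)]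
  exact div_le_div_of_nonneg_left (by positivity) (by linarith)
    (Real.self_le_rpow_of_one_le ht hq)

def luxSet (p : Eu n → ℝ) (Ω : Set (Eu n)) (f : Eu n → ℝ) : Set ℝ :=
  {l | 0 < l ∧ vModular p Ω (fun x => f x / l) ≤ 1}

lemma luxNorm_eq_sInf_luxSet : luxNorm p Ω f = sInf (luxSet p Ω f) := rfl

lemma luxSet_bddBelow : BddBelow (luxSet p Ω f) := ⟨0, fun _ hl => hl.1.le⟩

lemma luxNorm_nonneg : 0 ≤ luxNorm p Ω f := Real.sInf_nonneg fun _ hl => hl.1.le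

lemma luxSet_neg : luxSet p Ω (fun x => -f x) = luxSet p Ω f := by
  simp only [luxSet, vModular, neg_div, abs_neg]

lemma add_mem_luxSet (hpm : Measurable p) (hp1 : ∀ x ∈ Ω, 1 ≤ p x) (hf : Measurable f)
    (hg : Measurable g) {a b : ℝ} (ha : a ∈ luxSet p Ω f) (hb : b ∈ luxSet p Ω g) :
    a + b ∈ luxSet p Ω (fun x => f x + g x) := by
  obtain ⟨ha0, haf⟩ := ha
  obtain ⟨hb0, hbg⟩ := hb
  have hab : 0 < a + b := add_pos ha0 hb0
  refine ⟨hab, ?_⟩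
  calc vModular p Ω (fun x => (f x + g x) / (a + b))
      ≤ ∫⁻ x in Ω, (ENNReal.ofReal (a / (a + b)) * ENNReal.ofReal (|f x / a| ^ p x) +
          ENNReal.ofReal (b / (a + b)) * ENNReal.ofReal (|g x / b| ^ p x)) := by
        refine setLIntegral_mono (by fun_prop) fun x hx => ?_
        rw [← ENNReal.ofReal_mul (by positivity), ← ENNReal.ofReal_mul (by positivity),
          ← ENNReal.ofReal_add (by positivity) (by positivity)]
        exact ENNReal.ofReal_le_ofReal (abs_add_div_rpow_le (hp1 x hx) ha0 hb0)
    _ = ENNReal.ofReal (a / (a + b)) * vModular p Ω (fun x => f x / a) +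
          ENNReal.ofReal (b / (a + b)) * vModular p Ω (fun x => g x / b) := by
        rw [lintegral_add_left (by fun_prop), lintegral_const_mul _ (by fun_prop),
          lintegral_const_mul _ (by fun_prop)]
        rfl
    _ ≤ ENNReal.ofReal (a / (a + b)) * 1 + ENNReal.ofReal (b / (a + b)) * 1 := by gcongr
    _ = 1 := by
        rw [mul_one, mul_one, ← ENNReal.ofReal_add (by positivity) (by positivity), ← add_div,
          div_self hab.ne', ENNReal.ofReal_one]

lemma luxSet_nonempty (hpm : Measurable p) (hp1 : ∀ x ∈ Ω, 1 ≤ p x) (hf : MemLpVar p Ω f) :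
    (luxSet p Ω f).Nonempty := by
  obtain ⟨hfm, l, hl, hfin⟩ := hf
  set t := (vModular p Ω (fun x => f x / l)).toReal + 1
  have ht : 1 ≤ t := le_add_of_nonneg_left ENNReal.toReal_nonneg
  have hρt : vModular p Ω (fun x => f x / l) ≤ ENNReal.ofReal t := by
    rw [ENNReal.ofReal_add ENNReal.toReal_nonneg zero_le_one, ENNReal.ofReal_toReal hfin.ne,
      ENNReal.ofReal_one]
    exact le_self_add
  refine ⟨t * l, by positivity, ?_⟩
  calc vModular p Ω (fun x => f x / (t * l))
      ≤ ∫⁻ x in Ω, ENNReal.ofReal (|f x / l| ^ p x) * (ENNReal.ofReal t)⁻¹ := by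
        refine setLIntegral_mono (by fun_prop) fun x hx => ?_
        rw [← div_eq_mul_inv, ← ENNReal.ofReal_div_of_pos (by positivity)]
        refine ENNReal.ofReal_le_ofReal ?_
        simpa only [div_div, mul_comm l t] using abs_div_rpow_le (s := f x / l) (hp1 x hx) ht
    _ = vModular p Ω (fun x => f x / l) / ENNReal.ofReal t :=
        lintegral_mul_const _ (by fun_prop)
    _ ≤ 1 := ENNReal.div_le_of_le_mul (by rwa [one_mul])

lemma luxSet_sub_nonempty (hpm : Measurable p) (hp1 : ∀ x ∈ Ω, 1 ≤ p x)
    (hf : MemLpVar p Ω f) (hg : MemLpVar p Ω g) :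
    (luxSet p Ω (fun x => f x - g x)).Nonempty := by
  obtain ⟨a, ha⟩ := luxSet_nonempty hpm hp1 hf
  obtain ⟨b, hb⟩ := luxSet_nonempty hpm hp1 hg
  rw [← luxSet_neg] at hb
  simpa only [sub_eq_add_neg] using ⟨a + b, add_mem_luxSet hpm hp1 hf.1 hg.1.neg ha hb⟩

-- Since `sInf ∅ = 0` in `ℝ`, the nonemptiness hypotheses cannot be dropped.
lemma luxNorm_add_le (hpm : Measurable p) (hp1 : ∀ x ∈ Ω, 1 ≤ p x) (hf : Measurable f)
    (hg : Measurable g) (hf' : (luxSet p Ω f).Nonempty) (hg' : (luxSet p Ω g).Nonempty) :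
    luxNorm p Ω (fun x => f x + g x) ≤ luxNorm p Ω f + luxNorm p Ω g := by
  rw [luxNorm_eq_sInf_luxSet, luxNorm_eq_sInf_luxSet, luxNorm_eq_sInf_luxSet,
    ← csInf_add hf' luxSet_bddBelow hg' luxSet_bddBelow]
  refine csInf_le_csInf luxSet_bddBelow (hf'.add hg') ?_
  rintro _ ⟨a, ha, b, hb, rfl⟩
  exact add_mem_luxSet hpm hp1 hf hg ha hb

lemma luxNorm_sub_le_luxNorm_sub_add_luxNorm_sub (hpm : Measurable p)
    (hp1 : ∀ x ∈ Ω, 1 ≤ p x) (hf : MemLpVar p Ω f) (hg : MemLpVar p Ω g) (hh : MemLpVar p Ω h) :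
    luxNorm p Ω (fun x => f x - h x) ≤
      luxNorm p Ω (fun x => f x - g x) + luxNorm p Ω (fun x => g x - h x) := by
  simpa only [sub_add_sub_cancel] using
    luxNorm_add_le (f := fun x => f x - g x) (g := fun x => g x - h x) hpm hp1 (hf.1.sub hg.1) (hg.1.sub hh.1) (luxSet_sub_nonempty hpm hp1 hf hg)
      (luxSet_sub_nonempty hpm hp1 hg hh)

lemma LpTendsto.of_luxNorm_sub_tendsto_zero (hpm : Measurable p) (hp1 : ∀ x ∈ Ω, 1 ≤ p x)
    {v w : ℕ → Eu n → ℝ} {u : Eu n → ℝ} (hw : LpTendsto p Ω w u) (hv : ∀ k, MemLpVar p Ω (v k))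
    (hw' : ∀ k, MemLpVar p Ω (w k)) (hu : MemLpVar p Ω u)
    (hvw : Tendsto (fun k => luxNorm p Ω (fun x => v k x - w k x)) atTop (𝓝 0)) :
    LpTendsto p Ω v u :=
  squeeze_zero (fun _ => luxNorm_nonneg)
    (fun k => luxNorm_sub_le_luxNorm_sub_add_luxNorm_sub hpm hp1 (hv k) (hw' k) hu)
    (by simpa using hvw.add hw)

end LuxemburgNorm

section Relaxation

variable {n : ℕ} {p : Eu n → ℝ} {Ω : Set (Eu n)} {u : Eu n → ℝ}

lemma bvModular_le_liminf_gradModular {v : ℕ → Eu n → ℝ}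
    (hv : ∀ i, LocLipOn Ω (v i) ∧ MemLpVar p Ω (v i)) (hvu : LpTendsto p Ω v u) :
    bvModular p Ω u ≤ liminf (fun i => gradModular p Ω (v i)) atTop :=
  iInf₂_le v ⟨hv, hvu⟩

lemma exists_gradModular_lt_luxNorm_sub_lt_of_bvModular_lt {c : ℝ≥0∞}
    (hc : bvModular p Ω u < c) {ε : ℝ} (hε : 0 < ε) :
    ∃ w, (LocLipOn Ω w ∧ MemLpVar p Ω w) ∧ gradModular p Ω w < c ∧
      luxNorm p Ω (fun x => w x - u x) < ε := by
  obtain ⟨v, ⟨hv, hvu⟩, hlt⟩ : ∃ v : ℕ → Eu n → ℝ,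
      ((∀ i, LocLipOn Ω (v i) ∧ MemLpVar p Ω (v i)) ∧ LpTendsto p Ω v u) ∧
        liminf (fun i => gradModular p Ω (v i)) atTop < c := by
    simpa only [bvModular, iInf_lt_iff, exists_prop] using hc
  have hgrad : ∃ᶠ m in atTop, gradModular p Ω (v m) < c :=
    frequently_lt_of_liminf_lt (by isBoundedDefault) hlt
  obtain ⟨m, hm, hmε⟩ := (hgrad.and_eventually (hvu.eventually_lt_const hε)).exists
  exact ⟨v m, hv m, hm, hmε⟩

lemma bvModular_le_of_frequently_bvModular_lt (hpm : Measurable p) (hp1 : ∀ x ∈ Ω, 1 ≤ p x)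
    {ui : ℕ → Eu n → ℝ} {c : ℝ≥0∞} (hui : ∀ i, MemLpVar p Ω (ui i)) (hu : MemLpVar p Ω u)
    (hconv : LpTendsto p Ω ui u) (hfreq : ∃ᶠ i in atTop, bvModular p Ω (ui i) < c) :
    bvModular p Ω u ≤ c := by
  obtain ⟨φ, hφ, hφc⟩ := extraction_of_frequently_atTop hfreq
  choose w hw hwc hwε using fun k =>
    exists_gradModular_lt_luxNorm_sub_lt_of_bvModular_lt (hφc k) (Nat.one_div_pos_of_nat (n := k))
  have hsub : LpTendsto p Ω (fun k => ui (φ k)) u := by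
    unfold LpTendsto at hconv ⊢
    exact hconv.comp hφ.tendsto_atTop
  have hwu : LpTendsto p Ω w u :=
    LpTendsto.of_luxNorm_sub_tendsto_zero hpm hp1 hsub
      (fun k => (hw k).2) (fun k => hui (φ k)) hu
      (squeeze_zero (fun _ => luxNorm_nonneg) (fun k => (hwε k).le)
        tendsto_one_div_add_atTop_nhds_zero_nat)
  calc bvModular p Ω u ≤ liminf (fun k => gradModular p Ω (w k)) atTop :=
        bvModular_le_liminf_gradModular hw hwu
    _ ≤ c := liminf_le_of_frequently_le' (Frequently.of_forall fun k => (hwc k).le)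

end Relaxation

theorem bvModular_lowerSemicontinuous_general
    {n : ℕ} (p : Eu n → ℝ) (Ω : Set (Eu n))
    (hpm : Measurable p) (hp1 : ∀ x ∈ Ω, 1 ≤ p x)
    (u : Eu n → ℝ) (ui : ℕ → Eu n → ℝ)
    (hui : ∀ i, MemBVt p Ω (ui i)) (hu : MemLpVar p Ω u)
    (hconv : LpTendsto p Ω ui u) :
    bvModular p Ω u ≤ Filter.liminf (fun i => bvModular p Ω (ui i)) atTop :=
  le_of_forall_gt_imp_ge_of_dense fun _ hc =>
    bvModular_le_of_frequently_bvModular_lt hpm hp1 (fun i => (hui i).1) hu hconv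
      (frequently_lt_of_liminf_lt (by isBoundedDefault) hc)

/-- lower semicontinuity of the mixed pseudo-modular with respect
to `L^{p(·)}(Ω)` convergence. -/
theorem bvModular_lowerSemicontinuous
    {n : ℕ} (p : Eu n → ℝ) (Ω : Set (Eu n)) (hΩ : IsOpen Ω)
    (hpm : Measurable p) (hp1 : ∀ x ∈ Ω, 1 ≤ p x) (hpb : ∃ M : ℝ, ∀ x ∈ Ω, p x ≤ M)
    (u : Eu n → ℝ) (ui : ℕ → Eu n → ℝ)
    (hui : ∀ i, MemBVt p Ω (ui i)) (hu : MemLpVar p Ω u)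
    (hconv : LpTendsto p Ω ui u) :
    bvModular p Ω u ≤ Filter.liminf (fun i => bvModular p Ω (ui i)) atTop :=
  bvModular_lowerSemicontinuous_general p Ω hpm hp1 u ui hui hu hconv
end
end

section
/- (The mixed capacity is an outer capacity.) For any E ⊂ Ω, C̃_{BV^{p(·)}}(E) = inf{C̃_{BV^{p(·)}}(U) : E ⊂ U ⊂ Ω, U an open set}. -/
open MeasureTheory Filter Topology ENNReal Set

noncomputable section

/-- the mixed capacity is an outer capacity: it can be computed
as the infimum over open supersets. -/
theorem bvCapacity_outer
    {n : ℕ} (p : Eu n → ℝ) (Ω : Set (Eu n)) (hΩ : IsOpen Ω)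
    (hpm : Measurable p) (hp1 : ∀ x ∈ Ω, 1 ≤ p x) (hpb : ∃ M : ℝ, ∀ x ∈ Ω, p x ≤ M)
    (E : Set (Eu n)) (hE : E ⊆ Ω) :
    bvCapacity p Ω E =
      ⨅ (U : Set (Eu n)) (_ : IsOpen U ∧ E ⊆ U ∧ U ⊆ Ω), bvCapacity p Ω U := by
  apply le_antisymm
  · refine le_iInf fun U => le_iInf fun hU => ?_
    refine le_iInf fun u => le_iInf fun hu => ?_
    refine iInf₂_le u ?_
    obtain ⟨h1, h2, V, hV, hUV, hV1⟩ := hu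
    exact ⟨h1, h2, V, hV, hU.2.1.trans hUV, hV1⟩
  · refine le_iInf fun u => le_iInf fun hu => ?_
    obtain ⟨h1, h2, V, hV, hEV, hV1⟩ := hu
    calc (⨅ (U : Set (Eu n)) (_ : IsOpen U ∧ E ⊆ U ∧ U ⊆ Ω), bvCapacity p Ω U)
        ≤ bvCapacity p Ω (V ∩ Ω) :=
          iInf₂_le (V ∩ Ω) ⟨hV.inter hΩ, subset_inter hEV hE, inter_subset_right⟩
      _ ≤ vModular p Ω u + bvModular p Ω u :=
          iInf₂_le u ⟨h1, h2, V, hV, inter_subset_left, hV1⟩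
end
end

section
/- If K₁ ⊃ K₂ ⊃ … ⊃ K_i ⊃ K_{i+1} ⊃ … is a decreasing sequence of compact subsets of Ω and K = ⋂_{i=1}^∞ K_i, then C̃_{BV^{p(·)}}(K) = lim_{i→∞} C̃_{BV^{p(·)}}(K_i). -/
open MeasureTheory Filter Topology ENNReal Set

noncomputable section

lemma bvCapacity_mono {n : ℕ} (p : Eu n → ℝ) (Ω : Set (Eu n)) {E F : Set (Eu n)}
    (hEF : E ⊆ F) : bvCapacity p Ω E ≤ bvCapacity p Ω F :=
  le_iInf₂ fun _ ⟨hu, hbd, U, hU, hFU, h1U⟩ => iInf₂_le _ ⟨hu, hbd, U, hU, hEF.trans hFU, h1U⟩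

/-- Outer regularity: admissible functions equal `1` on a whole open neighbourhood of `E`. -/
lemma bvCapacity_eq_iInf_isOpen {n : ℕ} (p : Eu n → ℝ) (Ω E : Set (Eu n)) :
    bvCapacity p Ω E = ⨅ (U : Set (Eu n)) (_ : IsOpen U ∧ E ⊆ U), bvCapacity p Ω U := by
  refine le_antisymm ?_ (le_iInf₂ fun u ⟨hu, hbd, U, hU, hEU, h1U⟩ => ?_)
  · exact le_iInf₂ fun U hU => bvCapacity_mono p Ω hU.2
  · exact (iInf₂_le U ⟨hU, hEU⟩).trans
      (iInf₂_le u ⟨hu, hbd, U, hU, subset_rfl, h1U⟩)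

lemma bvCapacity_iInter_of_directed_isCompact {n : ℕ} (p : Eu n → ℝ) (Ω : Set (Eu n))
    {ι : Type*} [Nonempty ι] (K : ι → Set (Eu n)) (hdir : Directed (· ⊇ ·) K)
    (hK : ∀ i, IsCompact (K i)) :
    bvCapacity p Ω (⋂ i, K i) = ⨅ i, bvCapacity p Ω (K i) := by
  refine le_antisymm (le_iInf fun i => bvCapacity_mono p Ω (iInter_subset K i)) ?_
  rw [bvCapacity_eq_iInf_isOpen]
  refine le_iInf₂ fun U ⟨hU, hKU⟩ => ?_
  obtain ⟨i, hi⟩ := exists_subset_nhds_of_isCompact hdir hK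
    fun x hx => hU.mem_nhds (hKU hx)
  exact (iInf_le _ i).trans (bvCapacity_mono p Ω hi)

theorem bvCapacity_decreasing_compact_general
    {n : ℕ} (p : Eu n → ℝ) (Ω : Set (Eu n))
    (K : ℕ → Set (Eu n)) (hanti : Antitone K)
    (hK : ∀ i, IsCompact (K i)) :
    Tendsto (fun i => bvCapacity p Ω (K i)) atTop
      (𝓝 (bvCapacity p Ω (⋂ i, K i))) := by
  rw [bvCapacity_iInter_of_directed_isCompact p Ω K hanti.directed_ge hK]
  exact tendsto_atTop_iInf fun _ _ hij => bvCapacity_mono p Ω (hanti hij)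

/-- the mixed capacity of a decreasing intersection of compact
sets is the limit of the capacities. -/
theorem bvCapacity_decreasing_compact
    {n : ℕ} (p : Eu n → ℝ) (Ω : Set (Eu n)) (hΩ : IsOpen Ω)
    (hpm : Measurable p) (hp1 : ∀ x ∈ Ω, 1 ≤ p x) (hpb : ∃ M : ℝ, ∀ x ∈ Ω, p x ≤ M)
    (K : ℕ → Set (Eu n)) (hanti : Antitone K)
    (hK : ∀ i, IsCompact (K i)) (hsub : ∀ i, K i ⊆ Ω) :
    Tendsto (fun i => bvCapacity p Ω (K i)) atTop
      (𝓝 (bvCapacity p Ω (⋂ i, K i))) :=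
  bvCapacity_decreasing_compact_general p Ω K hanti hK
end
end
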